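/- arXiv:2202.13576 — 8 statements merged into one kernel-verified Lean document; each statement's English description precedes it below -/
import Mathlib

section
/- Let P, R be probability distributions on a finite set X, Q = w·P with w positive and E_P[w] = 1, and C ⊆ X with R(C), Q(C), P(C) > 0 and all relevant absolute continuities holding. Then the following are equivalent: (1) E_{Q|_C}[log w] + log(P(C)/Q(C)) = KL(R|_C ‖ P|_C) − KL(R|_C ‖ Q|_C); (2) KL(Q|_C ‖ P|_C) = KL(R|_C ‖ P|_C) − KL(R|_C ‖ Q|_C) (the conditional Pythagorean property); (3) E_{R|_C}[log w] = E_{Q|_C}[log w]. -/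
open Finset

noncomputable def kl {X : Type*} [Fintype X] (μ ν : X → ℝ) : ℝ :=
  ∑ x, μ x * Real.log (μ x / ν x)

noncomputable def condOn {X : Type*} [Fintype X] (μ : X → ℝ) (C : Finset X) : X → ℝ :=
  fun x => @ite ℝ (x ∈ C) (Classical.propDecidable _) (μ x / (∑ y ∈ C, μ y)) 0

noncomputable def bkl (p q : ℝ) : ℝ :=
  p * Real.log (p / q) + (1 - p) * Real.log ((1 - p) / (1 - q))

lemma kl_self_cond {X : Type*} [Fintype X] (μ : X → ℝ) (C : Finset X) :
    kl (condOn μ C) (condOn μ C) = 0 := by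
  unfold kl condOn
  apply Finset.sum_eq_zero
  intro x _
  by_cases hx : x ∈ C
  · simp only [if_pos hx]
    rcases eq_or_ne (μ x / ∑ y ∈ C, μ y) 0 with h | h
    · simp [h]
    · rw [div_self h, Real.log_one, mul_zero]
  · simp [if_neg hx]

lemma kl_diff_cond {X : Type*} [Fintype X] (P μ w : X → ℝ)
    (hP : ∀ x, 0 < P x) (hμ : ∀ x, 0 ≤ μ x) (hw : ∀ x, 0 < w x)
    (Q : X → ℝ) (hQ : ∀ x, Q x = w x * P x) (C : Finset X)
    (hμC : 0 < ∑ x ∈ C, μ x) (hQC : 0 < ∑ x ∈ C, Q x) (hPC : 0 < ∑ x ∈ C, P x) :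
    kl (condOn μ C) (condOn P C) - kl (condOn μ C) (condOn Q C)
      = (∑ x ∈ C, (μ x / ∑ y ∈ C, μ y) * Real.log (w x))
        + Real.log ((∑ x ∈ C, P x) / (∑ x ∈ C, Q x)) := by
  unfold kl
  rw [← Finset.sum_sub_distrib]
  rw [← Finset.sum_subset (Finset.subset_univ C) (by
      intro x _ hx
      simp [condOn, hx])]
  have key : ∀ x ∈ C,
      condOn μ C x * Real.log (condOn μ C x / condOn P C x)
        - condOn μ C x * Real.log (condOn μ C x / condOn Q C x)
      = (μ x / ∑ y ∈ C, μ y) *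
          (Real.log (w x) + Real.log ((∑ x ∈ C, P x) / (∑ x ∈ C, Q x))) := by
    intro x hx
    simp only [condOn, if_pos hx]
    rcases eq_or_lt_of_le (hμ x) with h0 | hpos
    · simp [← h0]
    · rw [← mul_sub]
      congr 1
      have hPx := hP x
      have hQx : 0 < Q x := by rw [hQ x]; exact mul_pos (hw x) hPx
      have ha : (0:ℝ) < μ x / ∑ y ∈ C, μ y := div_pos hpos hμC
      have hp : (0:ℝ) < P x / ∑ y ∈ C, P y := div_pos hPx hPC
      have hq : (0:ℝ) < Q x / ∑ y ∈ C, Q y := div_pos hQx hQC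
      rw [Real.log_div ha.ne' hp.ne', Real.log_div ha.ne' hq.ne',
          Real.log_div hQx.ne' hQC.ne', Real.log_div hPx.ne' hPC.ne',
          Real.log_div hPC.ne' hQC.ne',
          hQ x, Real.log_mul (hw x).ne' hPx.ne']
      ring
  rw [Finset.sum_congr rfl key]
  simp only [mul_add, Finset.sum_add_distrib, ← Finset.sum_mul, ← Finset.sum_div,
    div_self hμC.ne', one_mul]

theorem estimators_equiv {X : Type*} [Fintype X]
    (P R w : X → ℝ) (hP : ∀ x, 0 < P x) (hR : ∀ x, 0 ≤ R x)
    (hPsum : ∑ x, P x = 1) (hRsum : ∑ x, R x = 1)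
    (hw : ∀ x, 0 < w x) (hEw : ∑ x, P x * w x = 1)
    (Q : X → ℝ) (hQ : ∀ x, Q x = w x * P x)
    (C : Finset X)
    (hRC : 0 < ∑ x ∈ C, R x) (hQC : 0 < ∑ x ∈ C, Q x) (hPC : 0 < ∑ x ∈ C, P x) :
    (((∑ x ∈ C, (Q x / (∑ y ∈ C, Q y)) * Real.log (w x))
        + Real.log ((∑ x ∈ C, P x) / (∑ x ∈ C, Q x))
      = kl (condOn R C) (condOn P C) - kl (condOn R C) (condOn Q C))
    ↔ (kl (condOn Q C) (condOn P C)
      = kl (condOn R C) (condOn P C) - kl (condOn R C) (condOn Q C)))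
    ∧ ((kl (condOn Q C) (condOn P C)
      = kl (condOn R C) (condOn P C) - kl (condOn R C) (condOn Q C))
    ↔ ((∑ x ∈ C, (R x / (∑ y ∈ C, R y)) * Real.log (w x))
      = (∑ x ∈ C, (Q x / (∑ y ∈ C, Q y)) * Real.log (w x)))) := by
  have hQnn : ∀ x, 0 ≤ Q x := fun x => by rw [hQ x]; exact mul_nonneg (hw x).le (hP x).le
  have hQform := kl_diff_cond P Q w hP hQnn hw Q hQ C hQC hQC hPC
  have hRform := kl_diff_cond P R w hP hR hw Q hQ C hRC hQC hPC
  rw [kl_self_cond, sub_zero] at hQform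
  constructor
  · rw [hQform]
  · rw [hQform, hRform]
    constructor
    · intro h; linarith
    · intro h; linarith
end

section
/- Let S = {S_1,…,S_m} be a partition of a finite set X, P, R probability distributions with P(S_i) > 0 for all i, and Q the (R,S)-reweighting of P, i.e., Q(x) = (R(S_i)/P(S_i))·P(x) for x ∈ S_i. Suppose S is α-approximately multi-calibrated for (P, R, C), i.e., Σ_i R(S_i)·|R|_{S_i}(C) − P|_{S_i}(C)| ≤ α for every C ∈ C. Then Q is α-multiaccurate: |Q(C) − R(C)| ≤ α for every C ∈ C. -/
open Finset

theorem multicalibration_implies_multiaccuracy {X : Type*} [Fintype X] [DecidableEq X] {m : ℕ}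
    (S : Fin m → Finset X)
    (hdisj : ∀ i j, i ≠ j → Disjoint (S i) (S j))
    (hcover : ∀ x, ∃ i, x ∈ S i)
    (P R : X → ℝ) (hP : ∀ x, 0 ≤ P x) (hR : ∀ x, 0 ≤ R x)
    (hPsum : ∑ x, P x = 1) (hRsum : ∑ x, R x = 1)
    (hPS : ∀ i, 0 < ∑ x ∈ S i, P x)
    (ind : X → Fin m) (hind : ∀ x, x ∈ S (ind x))
    (Q : X → ℝ)
    (hQ : ∀ x, Q x = ((∑ y ∈ S (ind x), R y) / (∑ y ∈ S (ind x), P y)) * P x)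
    (𝒞 : Set (Finset X)) (α : ℝ)
    (hmc : ∀ C ∈ 𝒞,
      ∑ i, (∑ x ∈ S i, R x) *
        |(∑ x ∈ S i ∩ C, R x) / (∑ x ∈ S i, R x)
          - (∑ x ∈ S i ∩ C, P x) / (∑ x ∈ S i, P x)| ≤ α) :
    ∀ C ∈ 𝒞, |(∑ x ∈ C, Q x) - (∑ x ∈ C, R x)| ≤ α := by

  intro C hC
  have hindeq : ∀ i, ∀ x ∈ S i, ind x = i := by
    intro i x hx
    by_contra h
    exact Finset.disjoint_left.mp (hdisj _ _ h) (hind x) hx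
  have hfiber : ∀ i, C.filter (fun x => ind x = i) = S i ∩ C := by
    intro i; ext x
    simp only [Finset.mem_filter, Finset.mem_inter]
    constructor
    · rintro ⟨hxC, rfl⟩; exact ⟨hind x, hxC⟩
    · rintro ⟨hxS, hxC⟩; exact ⟨hxC, hindeq i x hxS⟩
  have hsplit : ∀ f : X → ℝ, ∑ x ∈ C, f x = ∑ i, ∑ x ∈ S i ∩ C, f x := by
    intro f
    rw [← Finset.sum_fiberwise C ind f]
    exact Finset.sum_congr rfl fun i _ => by rw [hfiber]
  have hterm : ∀ i : Fin m, |(∑ x ∈ S i ∩ C, Q x) - (∑ x ∈ S i ∩ C, R x)|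
      ≤ (∑ x ∈ S i, R x) *
        |(∑ x ∈ S i ∩ C, R x) / (∑ x ∈ S i, R x)
          - (∑ x ∈ S i ∩ C, P x) / (∑ x ∈ S i, P x)| := by
    intro i
    have hQsum : (∑ x ∈ S i ∩ C, Q x)
        = (∑ x ∈ S i, R x) * ((∑ x ∈ S i ∩ C, P x) / (∑ x ∈ S i, P x)) := by
      have h1 : ∀ x ∈ S i ∩ C, Q x = ((∑ y ∈ S i, R y) / (∑ y ∈ S i, P y)) * P x := by
        intro x hx
        rw [hQ x, hindeq i x (Finset.mem_inter.mp hx).1]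
      rw [Finset.sum_congr rfl h1, ← Finset.mul_sum]
      ring
    rcases eq_or_lt_of_le (Finset.sum_nonneg (fun x _ => hR x) : (0:ℝ) ≤ ∑ x ∈ S i, R x)
      with hz | hpos
    · have hRC : (∑ x ∈ S i ∩ C, R x) = 0 := by
        have hle : (∑ x ∈ S i ∩ C, R x) ≤ ∑ x ∈ S i, R x :=
          Finset.sum_le_sum_of_subset_of_nonneg (Finset.inter_subset_left)
            (fun x _ _ => hR x)
        have hge : (0:ℝ) ≤ ∑ x ∈ S i ∩ C, R x :=
          Finset.sum_nonneg (fun x _ => hR x)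
        linarith [hz]
      rw [hQsum, ← hz, hRC]
      simp
    · have hPne : (∑ x ∈ S i, P x) ≠ 0 := ne_of_gt (hPS i)
      have hRne : (∑ x ∈ S i, R x) ≠ 0 := ne_of_gt hpos
      have hRC : (∑ x ∈ S i ∩ C, R x)
          = (∑ x ∈ S i, R x) * ((∑ x ∈ S i ∩ C, R x) / (∑ x ∈ S i, R x)) := by
        field_simp
      rw [hQsum]
      have heq : (∑ x ∈ S i, R x) * ((∑ x ∈ S i ∩ C, P x) / (∑ x ∈ S i, P x))
            - (∑ x ∈ S i ∩ C, R x)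
          = -((∑ x ∈ S i, R x) * ((∑ x ∈ S i ∩ C, R x) / (∑ x ∈ S i, R x)
              - (∑ x ∈ S i ∩ C, P x) / (∑ x ∈ S i, P x))) := by
        field_simp
        ring
      rw [heq, abs_neg, abs_mul, abs_of_pos hpos]
  calc |(∑ x ∈ C, Q x) - (∑ x ∈ C, R x)|
      = |∑ i, ((∑ x ∈ S i ∩ C, Q x) - (∑ x ∈ S i ∩ C, R x))| := by
        rw [hsplit Q, hsplit R, Finset.sum_sub_distrib]
    _ ≤ ∑ i, |(∑ x ∈ S i ∩ C, Q x) - (∑ x ∈ S i ∩ C, R x)| :=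
        Finset.abs_sum_le_sum_abs _ _
    _ ≤ ∑ i, (∑ x ∈ S i, R x) *
        |(∑ x ∈ S i ∩ C, R x) / (∑ x ∈ S i, R x)
          - (∑ x ∈ S i ∩ C, P x) / (∑ x ∈ S i, P x)| :=
        Finset.sum_le_sum (fun i _ => hterm i)
    _ ≤ α := hmc C hC
end

section
/- Let S = {S_1,…,S_m} be a partition of a finite set X, P, R probability distributions with P(S_i) > 0 for all i, and Q the (R,S)-reweighting of P. Suppose Σ_i R(S_i)·|R|_{S_i}(C) − P|_{S_i}(C)| ≤ α for a set C ⊆ X with R(C) > 0 and Q(C) > 0. Then the total variation between the distributions that R|_C and Q|_C induce on the partition satisfies Σ_i |R|_C(S_i) − Q|_C(S_i)| ≤ 2α/R(C). -/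
open Finset

theorem induced_tv_bound {X : Type*} [Fintype X] [DecidableEq X] {m : ℕ}
    (S : Fin m → Finset X)
    (hdisj : ∀ i j, i ≠ j → Disjoint (S i) (S j))
    (hcover : ∀ x, ∃ i, x ∈ S i)
    (P R : X → ℝ) (hP : ∀ x, 0 ≤ P x) (hR : ∀ x, 0 ≤ R x)
    (hPsum : ∑ x, P x = 1) (hRsum : ∑ x, R x = 1)
    (hPS : ∀ i, 0 < ∑ x ∈ S i, P x)
    (ind : X → Fin m) (hind : ∀ x, x ∈ S (ind x))
    (Q : X → ℝ)
    (hQ : ∀ x, Q x = ((∑ y ∈ S (ind x), R y) / (∑ y ∈ S (ind x), P y)) * P x)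
    (C : Finset X) (α : ℝ)
    (hmc : ∑ i, (∑ x ∈ S i, R x) *
        |(∑ x ∈ S i ∩ C, R x) / (∑ x ∈ S i, R x)
          - (∑ x ∈ S i ∩ C, P x) / (∑ x ∈ S i, P x)| ≤ α)
    (hRC : 0 < ∑ x ∈ C, R x) (hQC : 0 < ∑ x ∈ C, Q x) :
    ∑ i, |(∑ x ∈ S i ∩ C, R x) / (∑ x ∈ C, R x)
        - (∑ x ∈ S i ∩ C, Q x) / (∑ x ∈ C, Q x)| ≤ 2 * α / (∑ x ∈ C, R x) := by

  classical
  have hind' : ∀ i, ∀ x ∈ S i, ind x = i := by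
    intro i x hx
    by_contra h
    exact Finset.disjoint_left.mp (hdisj _ _ h) (hind x) hx
  have hfilter : ∀ i, S i ∩ C = C.filter (fun x => ind x = i) := by
    intro i
    ext x
    simp only [Finset.mem_inter, Finset.mem_filter]
    constructor
    · rintro ⟨hx, hc⟩; exact ⟨hc, hind' i x hx⟩
    · rintro ⟨hc, hi⟩; exact ⟨hi ▸ hind x, hc⟩
  have hdecomp : ∀ f : X → ℝ, ∑ i, ∑ x ∈ S i ∩ C, f x = ∑ x ∈ C, f x := by
    intro f
    simp_rw [hfilter]
    exact Finset.sum_fiberwise_of_maps_to (fun x _ => Finset.mem_univ _) f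
  have hQi : ∀ i, ∑ x ∈ S i ∩ C, Q x
      = (∑ x ∈ S i, R x) / (∑ x ∈ S i, P x) * ∑ x ∈ S i ∩ C, P x := by
    intro i
    rw [Finset.mul_sum]
    refine Finset.sum_congr rfl fun x hx => ?_
    rw [hQ x, hind' i x (Finset.mem_inter.mp hx).1]
  have hQnn : ∀ x, 0 ≤ Q x := by
    intro x
    rw [hQ x]
    exact mul_nonneg (div_nonneg (Finset.sum_nonneg fun y _ => hR y) (hPS _).le) (hP x)
  have hkey : ∀ i, |(∑ x ∈ S i ∩ C, R x) - (∑ x ∈ S i ∩ C, Q x)|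
      ≤ (∑ x ∈ S i, R x) * |(∑ x ∈ S i ∩ C, R x) / (∑ x ∈ S i, R x)
          - (∑ x ∈ S i ∩ C, P x) / (∑ x ∈ S i, P x)| := by
    intro i
    have hrnn : 0 ≤ ∑ x ∈ S i, R x := Finset.sum_nonneg fun x _ => hR x
    rcases eq_or_lt_of_le hrnn with h0 | h0
    · have hR0 : ∑ x ∈ S i ∩ C, R x = 0 := by
        refine Finset.sum_eq_zero fun x hx => ?_
        have := (Finset.sum_eq_zero_iff_of_nonneg (fun y _ => hR y)).mp h0.symm
        exact this x (Finset.mem_inter.mp hx).1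
      rw [hQi i, ← h0, hR0]
      simp
    · apply le_of_eq
      have habs : (∑ x ∈ S i, R x) * |(∑ x ∈ S i ∩ C, R x) / (∑ x ∈ S i, R x)
          - (∑ x ∈ S i ∩ C, P x) / (∑ x ∈ S i, P x)|
          = |(∑ x ∈ S i, R x) * ((∑ x ∈ S i ∩ C, R x) / (∑ x ∈ S i, R x)
          - (∑ x ∈ S i ∩ C, P x) / (∑ x ∈ S i, P x))| := by
        rw [abs_mul, abs_of_pos h0]
      rw [hQi i, habs]
      congr 1
      field_simp
  have hsum : ∑ i, |(∑ x ∈ S i ∩ C, R x) - (∑ x ∈ S i ∩ C, Q x)| ≤ α :=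
    le_trans (Finset.sum_le_sum fun i _ => hkey i) hmc
  have hRdec : ∑ i, ∑ x ∈ S i ∩ C, R x = ∑ x ∈ C, R x := hdecomp R
  have hQdec : ∑ i, ∑ x ∈ S i ∩ C, Q x = ∑ x ∈ C, Q x := hdecomp Q
  have hCC : |(∑ x ∈ C, Q x) - (∑ x ∈ C, R x)| ≤ α := by
    rw [← hRdec, ← hQdec, ← Finset.sum_sub_distrib]
    refine le_trans (Finset.abs_sum_le_sum_abs _ _) ?_
    calc ∑ i, |(∑ x ∈ S i ∩ C, Q x) - (∑ x ∈ S i ∩ C, R x)|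
        = ∑ i, |(∑ x ∈ S i ∩ C, R x) - (∑ x ∈ S i ∩ C, Q x)| := by
          simp_rw [abs_sub_comm]
      _ ≤ α := hsum
  set RC := ∑ x ∈ C, R x with hRCdef
  set QC := ∑ x ∈ C, Q x with hQCdef
  have hterm : ∀ i, |(∑ x ∈ S i ∩ C, R x) / RC - (∑ x ∈ S i ∩ C, Q x) / QC|
      ≤ |(∑ x ∈ S i ∩ C, R x) - (∑ x ∈ S i ∩ C, Q x)| / RC
        + ((∑ x ∈ S i ∩ C, Q x) / QC) * (|QC - RC| / RC) := by
    intro i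
    have heq : (∑ x ∈ S i ∩ C, R x) / RC - (∑ x ∈ S i ∩ C, Q x) / QC
        = ((∑ x ∈ S i ∩ C, R x) - (∑ x ∈ S i ∩ C, Q x)) / RC
          + ((∑ x ∈ S i ∩ C, Q x) / QC) * ((QC - RC) / RC) := by
      field_simp
      ring
    rw [heq]
    refine le_trans (abs_add_le _ _) (le_of_eq ?_)
    rw [abs_div, abs_of_pos hRC, abs_mul, abs_div, abs_of_pos hQC, abs_div,
      abs_of_pos hRC, abs_of_nonneg (Finset.sum_nonneg fun x _ => hQnn x)]
  calc ∑ i, |(∑ x ∈ S i ∩ C, R x) / RC - (∑ x ∈ S i ∩ C, Q x) / QC|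
      ≤ ∑ i, (|(∑ x ∈ S i ∩ C, R x) - (∑ x ∈ S i ∩ C, Q x)| / RC
        + ((∑ x ∈ S i ∩ C, Q x) / QC) * (|QC - RC| / RC)) :=
        Finset.sum_le_sum fun i _ => hterm i
    _ = (∑ i, |(∑ x ∈ S i ∩ C, R x) - (∑ x ∈ S i ∩ C, Q x)|) / RC
        + (∑ i, (∑ x ∈ S i ∩ C, Q x)) / QC * (|QC - RC| / RC) := by
        rw [Finset.sum_add_distrib, ← Finset.sum_div, ← Finset.sum_mul, ← Finset.sum_div]
    _ = (∑ i, |(∑ x ∈ S i ∩ C, R x) - (∑ x ∈ S i ∩ C, Q x)|) / RC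
        + |QC - RC| / RC := by
        rw [hQdec, div_self hQC.ne', one_mul]
    _ ≤ α / RC + α / RC := by
        gcongr
    _ = 2 * α / RC := by ring
end

section
/- Let S be a partition of finite X, P, R probability distributions with P(S_i) > 0 and R(S_i) > 0 for all i, and Q the (R,S)-reweighting of P with weights w(S_i) = R(S_i)/P(S_i). Suppose Σ_i R(S_i)·|R|_{S_i}(C) − P|_{S_i}(C)| ≤ α for C ⊆ X with R(C) > 0, and let M = max_i max(w(S_i), 1/w(S_i)). Then |KL(R|_C ‖ P|_C) − KL(R|_C ‖ Q|_C) − KL(Q|_C ‖ P|_C)| ≤ (2α/R(C))·log M, assuming all KL terms are finite. -/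
open Finset

theorem approx_pythagorean {X : Type*} [Fintype X] [DecidableEq X] {m : ℕ} [NeZero m]
    (S : Fin m → Finset X)
    (hdisj : ∀ i j, i ≠ j → Disjoint (S i) (S j))
    (hcover : ∀ x, ∃ i, x ∈ S i)
    (P R : X → ℝ) (hP : ∀ x, 0 < P x) (hR : ∀ x, 0 ≤ R x)
    (hPsum : ∑ x, P x = 1) (hRsum : ∑ x, R x = 1)
    (hPS : ∀ i, 0 < ∑ x ∈ S i, P x) (hRS : ∀ i, 0 < ∑ x ∈ S i, R x)
    (ind : X → Fin m) (hind : ∀ x, x ∈ S (ind x))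
    (w : Fin m → ℝ) (hwdef : ∀ i, w i = (∑ y ∈ S i, R y) / (∑ y ∈ S i, P y))
    (Q : X → ℝ) (hQ : ∀ x, Q x = w (ind x) * P x)
    (C : Finset X) (α : ℝ)
    (hmc : ∑ i, (∑ x ∈ S i, R x) *
        |(∑ x ∈ S i ∩ C, R x) / (∑ x ∈ S i, R x)
          - (∑ x ∈ S i ∩ C, P x) / (∑ x ∈ S i, P x)| ≤ α)
    (hRC : 0 < ∑ x ∈ C, R x) (hRCx : ∀ x ∈ C, 0 < R x)
    (M : ℝ)
    (hM : M = Finset.univ.sup' (Finset.univ_nonempty (α := Fin m))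
      (fun i => max (w i) (w i)⁻¹)) :
    |kl (condOn R C) (condOn P C) - kl (condOn R C) (condOn Q C) - kl (condOn Q C) (condOn P C)|
      ≤ (2 * α / (∑ x ∈ C, R x)) * Real.log M := by
  classical
  -- basic positivity
  have hCne : C.Nonempty := by
    rcases Finset.eq_empty_or_nonempty C with h | h
    · rw [h] at hRC; simp at hRC
    · exact h
  have hw : ∀ i, 0 < w i := fun i => by rw [hwdef]; exact div_pos (hRS i) (hPS i)
  have hQpos : ∀ x, 0 < Q x := fun x => by rw [hQ]; exact mul_pos (hw _) (hP x)
  have hPC : 0 < ∑ y ∈ C, P y := Finset.sum_pos (fun x _ => hP x) hCne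
  have hQC : 0 < ∑ y ∈ C, Q y := Finset.sum_pos (fun x _ => hQpos x) hCne
  -- fibers
  have hfib : ∀ i, S i ∩ C = C.filter (fun x => ind x = i) := by
    intro i
    ext x
    simp only [Finset.mem_inter, Finset.mem_filter]
    constructor
    · rintro ⟨hxS, hxC⟩
      refine ⟨hxC, ?_⟩
      by_contra hne
      exact (Finset.disjoint_left.mp (hdisj i (ind x) (Ne.symm hne))) hxS (hind x)
    · rintro ⟨hxC, hi⟩
      exact ⟨hi ▸ hind x, hxC⟩
  have hfibsum : ∀ (g : X → ℝ), ∑ x ∈ C, g x = ∑ i, ∑ x ∈ S i ∩ C, g x := by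
    intro g
    rw [← Finset.sum_fiberwise C ind g]
    exact Finset.sum_congr rfl fun i _ =>
      (Finset.sum_congr (hfib i) fun _ _ => rfl).symm
  have hindfib : ∀ i, ∀ x ∈ S i ∩ C, ind x = i := by
    intro i x hx
    rw [hfib i, Finset.mem_filter] at hx
    exact hx.2
  have hB : ∀ i, (∑ x ∈ S i ∩ C, Q x) = w i * ∑ x ∈ S i ∩ C, P x := by
    intro i
    rw [Finset.mul_sum]
    exact Finset.sum_congr rfl fun x hx => by rw [hQ, hindfib i x hx]
  -- kl restricted to C
  have hklC : ∀ μ ν : X → ℝ, kl (condOn μ C) (condOn ν C) =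
      ∑ x ∈ C, (μ x / ∑ y ∈ C, μ y) *
        Real.log ((μ x / ∑ y ∈ C, μ y) / (ν x / ∑ y ∈ C, ν y)) := by
    intro μ ν
    unfold kl condOn
    rw [← Finset.sum_subset (Finset.subset_univ C)]
    · exact Finset.sum_congr rfl fun x hx => by simp [hx]
    · intro x _ hx; simp [hx]
  -- step 1
  have hstep1 : kl (condOn R C) (condOn P C) - kl (condOn R C) (condOn Q C)
      - kl (condOn Q C) (condOn P C)
      = ∑ x ∈ C, (R x / (∑ y ∈ C, R y) - Q x / (∑ y ∈ C, Q y)) * Real.log (w (ind x)) := by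
    rw [hklC R P, hklC R Q, hklC Q P, ← Finset.sum_sub_distrib, ← Finset.sum_sub_distrib]
    have expand : ∀ x ∈ C,
        (R x / (∑ y ∈ C, R y)) * Real.log ((R x / ∑ y ∈ C, R y) / (P x / ∑ y ∈ C, P y))
        - (R x / (∑ y ∈ C, R y)) * Real.log ((R x / ∑ y ∈ C, R y) / (Q x / ∑ y ∈ C, Q y))
        - (Q x / (∑ y ∈ C, Q y)) * Real.log ((Q x / ∑ y ∈ C, Q y) / (P x / ∑ y ∈ C, P y))
        = (R x / (∑ y ∈ C, R y) - Q x / (∑ y ∈ C, Q y)) *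
            (Real.log (w (ind x)) + (Real.log (∑ y ∈ C, P y) - Real.log (∑ y ∈ C, Q y))) := by
      intro x hx
      have hRx : 0 < R x := hRCx x hx
      have l1 : Real.log ((R x / ∑ y ∈ C, R y) / (P x / ∑ y ∈ C, P y))
          = (Real.log (R x) - Real.log (∑ y ∈ C, R y))
            - (Real.log (P x) - Real.log (∑ y ∈ C, P y)) := by
        rw [Real.log_div (div_pos hRx hRC).ne' (div_pos (hP x) hPC).ne',
          Real.log_div hRx.ne' hRC.ne', Real.log_div (hP x).ne' hPC.ne']
      have l2 : Real.log ((R x / ∑ y ∈ C, R y) / (Q x / ∑ y ∈ C, Q y))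
          = (Real.log (R x) - Real.log (∑ y ∈ C, R y))
            - (Real.log (Q x) - Real.log (∑ y ∈ C, Q y)) := by
        rw [Real.log_div (div_pos hRx hRC).ne' (div_pos (hQpos x) hQC).ne',
          Real.log_div hRx.ne' hRC.ne', Real.log_div (hQpos x).ne' hQC.ne']
      have l3 : Real.log ((Q x / ∑ y ∈ C, Q y) / (P x / ∑ y ∈ C, P y))
          = (Real.log (Q x) - Real.log (∑ y ∈ C, Q y))
            - (Real.log (P x) - Real.log (∑ y ∈ C, P y)) := by
        rw [Real.log_div (div_pos (hQpos x) hQC).ne' (div_pos (hP x) hPC).ne',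
          Real.log_div (hQpos x).ne' hQC.ne', Real.log_div (hP x).ne' hPC.ne']
      have lQ : Real.log (Q x) = Real.log (w (ind x)) + Real.log (P x) := by
        rw [hQ, Real.log_mul (hw _).ne' (hP x).ne']
      rw [l1, l2, l3, lQ]
      ring
    rw [Finset.sum_congr rfl expand]
    simp only [mul_add]
    rw [Finset.sum_add_distrib, ← Finset.sum_mul]
    have hzero : ∑ x ∈ C, (R x / (∑ y ∈ C, R y) - Q x / (∑ y ∈ C, Q y)) = 0 := by
      rw [Finset.sum_sub_distrib, ← Finset.sum_div, ← Finset.sum_div,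
        div_self hRC.ne', div_self hQC.ne', sub_self]
    rw [hzero, zero_mul, add_zero]
  -- step 2: fiberwise
  have hstep2 : ∑ x ∈ C, (R x / (∑ y ∈ C, R y) - Q x / (∑ y ∈ C, Q y)) * Real.log (w (ind x))
      = ∑ i, ((∑ x ∈ S i ∩ C, R x) / (∑ y ∈ C, R y)
          - (∑ x ∈ S i ∩ C, Q x) / (∑ y ∈ C, Q y)) * Real.log (w i) := by
    rw [hfibsum]
    refine Finset.sum_congr rfl fun i _ => ?_
    have : ∀ x ∈ S i ∩ C,
        (R x / (∑ y ∈ C, R y) - Q x / (∑ y ∈ C, Q y)) * Real.log (w (ind x))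
        = (R x / (∑ y ∈ C, R y) - Q x / (∑ y ∈ C, Q y)) * Real.log (w i) := by
      intro x hx; rw [hindfib i x hx]
    rw [Finset.sum_congr rfl this, ← Finset.sum_mul, Finset.sum_sub_distrib,
      ← Finset.sum_div, ← Finset.sum_div]
  -- E bound
  have hAB : ∀ i, |(∑ x ∈ S i ∩ C, R x) - (∑ x ∈ S i ∩ C, Q x)|
      = (∑ x ∈ S i, R x) * |(∑ x ∈ S i ∩ C, R x) / (∑ x ∈ S i, R x)
          - (∑ x ∈ S i ∩ C, P x) / (∑ x ∈ S i, P x)| := by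
    intro i
    rw [hB i, hwdef i]
    have : (∑ x ∈ S i ∩ C, R x) - (∑ y ∈ S i, R y) / (∑ y ∈ S i, P y) * (∑ x ∈ S i ∩ C, P x)
        = (∑ x ∈ S i, R x) * ((∑ x ∈ S i ∩ C, R x) / (∑ x ∈ S i, R x)
            - (∑ x ∈ S i ∩ C, P x) / (∑ x ∈ S i, P x)) := by
      field_simp [(hRS i).ne', (hPS i).ne']
    rw [this, abs_mul, abs_of_pos (hRS i)]
  have hE : ∑ i, |(∑ x ∈ S i ∩ C, R x) - (∑ x ∈ S i ∩ C, Q x)| ≤ α := by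
    calc ∑ i, |(∑ x ∈ S i ∩ C, R x) - (∑ x ∈ S i ∩ C, Q x)|
        = ∑ i, (∑ x ∈ S i, R x) * |(∑ x ∈ S i ∩ C, R x) / (∑ x ∈ S i, R x)
            - (∑ x ∈ S i ∩ C, P x) / (∑ x ∈ S i, P x)| :=
          Finset.sum_congr rfl fun i _ => hAB i
      _ ≤ α := hmc
  have hRCsum : (∑ y ∈ C, R y) = ∑ i, ∑ x ∈ S i ∩ C, R x := hfibsum R
  have hQCsum : (∑ y ∈ C, Q y) = ∑ i, ∑ x ∈ S i ∩ C, Q x := hfibsum Q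
  have hdiffQR : |(∑ y ∈ C, Q y) - (∑ y ∈ C, R y)| ≤ α := by
    rw [hQCsum, hRCsum, ← Finset.sum_sub_distrib]
    calc |∑ i, ((∑ x ∈ S i ∩ C, Q x) - ∑ x ∈ S i ∩ C, R x)|
        ≤ ∑ i, |(∑ x ∈ S i ∩ C, Q x) - ∑ x ∈ S i ∩ C, R x| := Finset.abs_sum_le_sum_abs _ _
      _ = ∑ i, |(∑ x ∈ S i ∩ C, R x) - ∑ x ∈ S i ∩ C, Q x| := by
          exact Finset.sum_congr rfl fun i _ => abs_sub_comm _ _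
      _ ≤ α := hE
  -- coefficient sum bound
  have hsumabs : ∑ i, |(∑ x ∈ S i ∩ C, R x) / (∑ y ∈ C, R y)
      - (∑ x ∈ S i ∩ C, Q x) / (∑ y ∈ C, Q y)| ≤ 2 * α / (∑ y ∈ C, R y) := by
    have hterm : ∀ i, |(∑ x ∈ S i ∩ C, R x) / (∑ y ∈ C, R y)
        - (∑ x ∈ S i ∩ C, Q x) / (∑ y ∈ C, Q y)|
        ≤ |(∑ x ∈ S i ∩ C, R x) - (∑ x ∈ S i ∩ C, Q x)| / (∑ y ∈ C, R y)
          + (∑ x ∈ S i ∩ C, Q x) * |(∑ y ∈ C, Q y) - (∑ y ∈ C, R y)|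
            / ((∑ y ∈ C, R y) * (∑ y ∈ C, Q y)) := by
      intro i
      have hBnn : 0 ≤ ∑ x ∈ S i ∩ C, Q x := Finset.sum_nonneg fun x _ => (hQpos x).le
      have heq : (∑ x ∈ S i ∩ C, R x) / (∑ y ∈ C, R y)
          - (∑ x ∈ S i ∩ C, Q x) / (∑ y ∈ C, Q y)
          = ((∑ x ∈ S i ∩ C, R x) - (∑ x ∈ S i ∩ C, Q x)) / (∑ y ∈ C, R y)
            + (∑ x ∈ S i ∩ C, Q x) * ((∑ y ∈ C, Q y) - (∑ y ∈ C, R y))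
              / ((∑ y ∈ C, R y) * (∑ y ∈ C, Q y)) := by
        field_simp
        ring
      rw [heq]
      refine (abs_add_le _ _).trans (le_of_eq ?_)
      rw [abs_div, abs_of_pos hRC, abs_div, abs_mul, abs_of_nonneg hBnn,
        abs_of_pos (mul_pos hRC hQC)]
    calc ∑ i, |(∑ x ∈ S i ∩ C, R x) / (∑ y ∈ C, R y)
            - (∑ x ∈ S i ∩ C, Q x) / (∑ y ∈ C, Q y)|
        ≤ ∑ i, (|(∑ x ∈ S i ∩ C, R x) - (∑ x ∈ S i ∩ C, Q x)| / (∑ y ∈ C, R y)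
          + (∑ x ∈ S i ∩ C, Q x) * |(∑ y ∈ C, Q y) - (∑ y ∈ C, R y)|
            / ((∑ y ∈ C, R y) * (∑ y ∈ C, Q y))) :=
          Finset.sum_le_sum fun i _ => hterm i
      _ = (∑ i, |(∑ x ∈ S i ∩ C, R x) - (∑ x ∈ S i ∩ C, Q x)|) / (∑ y ∈ C, R y)
          + (∑ i, ∑ x ∈ S i ∩ C, Q x) * |(∑ y ∈ C, Q y) - (∑ y ∈ C, R y)|
            / ((∑ y ∈ C, R y) * (∑ y ∈ C, Q y)) := by
          rw [Finset.sum_add_distrib, ← Finset.sum_div, ← Finset.sum_div, ← Finset.sum_mul]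
      _ = (∑ i, |(∑ x ∈ S i ∩ C, R x) - (∑ x ∈ S i ∩ C, Q x)|) / (∑ y ∈ C, R y)
          + |(∑ y ∈ C, Q y) - (∑ y ∈ C, R y)| / (∑ y ∈ C, R y) := by
          rw [← hQCsum]
          congr 1
          field_simp
      _ ≤ α / (∑ y ∈ C, R y) + α / (∑ y ∈ C, R y) := by
          gcongr
      _ = 2 * α / (∑ y ∈ C, R y) := by ring
  -- log bounds
  have hMw : ∀ i, |Real.log (w i)| ≤ Real.log M := by
    intro i
    have h1 : w i ≤ M := by
      rw [hM]
      exact le_trans (le_max_left _ _) (Finset.le_sup' (fun j => max (w j) (w j)⁻¹) (Finset.mem_univ i))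
    have h2 : (w i)⁻¹ ≤ M := by
      rw [hM]
      exact le_trans (le_max_right _ _) (Finset.le_sup' (fun j => max (w j) (w j)⁻¹) (Finset.mem_univ i))
    rw [abs_le]
    constructor
    · rw [neg_le, ← Real.log_inv]
      exact Real.log_le_log (inv_pos.mpr (hw i)) h2
    · exact Real.log_le_log (hw i) h1
  have i0 : Fin m := ⟨0, Nat.pos_of_ne_zero (NeZero.ne m)⟩
  have hlogM : 0 ≤ Real.log M := le_trans (abs_nonneg _) (hMw i0)
  -- conclude
  rw [hstep1, hstep2]
  calc |∑ i, ((∑ x ∈ S i ∩ C, R x) / (∑ y ∈ C, R y)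
        - (∑ x ∈ S i ∩ C, Q x) / (∑ y ∈ C, Q y)) * Real.log (w i)|
      ≤ ∑ i, |((∑ x ∈ S i ∩ C, R x) / (∑ y ∈ C, R y)
        - (∑ x ∈ S i ∩ C, Q x) / (∑ y ∈ C, Q y)) * Real.log (w i)| :=
        Finset.abs_sum_le_sum_abs _ _
    _ ≤ ∑ i, |(∑ x ∈ S i ∩ C, R x) / (∑ y ∈ C, R y)
        - (∑ x ∈ S i ∩ C, Q x) / (∑ y ∈ C, Q y)| * Real.log M := by
        refine Finset.sum_le_sum fun i _ => ?_
        rw [abs_mul]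
        exact mul_le_mul_of_nonneg_left (hMw i) (abs_nonneg _)
    _ = (∑ i, |(∑ x ∈ S i ∩ C, R x) / (∑ y ∈ C, R y)
        - (∑ x ∈ S i ∩ C, Q x) / (∑ y ∈ C, Q y)|) * Real.log M := by
        rw [Finset.sum_mul]
    _ ≤ (2 * α / (∑ y ∈ C, R y)) * Real.log M :=
        mul_le_mul_of_nonneg_right hsumabs hlogM
end

section
/- Let P, R be probability distributions on a finite set X with P full support and R absolutely continuous w.r.t. P, with true weights w*(x) = R(x)/P(x). Let Q = w·P with w positive, and let C ⊆ X with R(C), Q(C), P(C) > 0. If |Q(C) − R(C)| ≤ α (multiaccuracy) and KL(R|_C ‖ Q|_C) is finite, then E_{R|_C}[log w(x)] ≤ E_{R|_C}[log w*(x)] + α/R(C). -/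
open Finset

/-!
Since `Q = w P`, on `C` we have `R log w = R log (Q / R) + R log (R / P)` pointwise. By
`log t ≤ t - 1` (Gibbs' inequality for the unnormalised restrictions) the first term sums to at
most `Q(C) - R(C) ≤ α`; dividing by `R(C)` turns the sums into `R|_C`-expectations.
-/

namespace Real

theorem mul_log_div_le_sub {q r : ℝ} (hq : 0 < q) (hr : 0 ≤ r) :
    r * log (q / r) ≤ q - r := by
  rcases hr.eq_or_lt with rfl | hr
  · simpa using hq.le
  calc r * log (q / r) ≤ r * (q / r - 1) := by
        gcongr
        exact log_le_sub_one_of_pos (div_pos hq hr)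
    _ = q - r := by field_simp

theorem mul_log_eq_mul_log_div_add_mul_log_div {w p r : ℝ} (hw : 0 < w) (hp : 0 < p)
    (hr : 0 ≤ r) : r * log w = r * log (w * p / r) + r * log (r / p) := by
  rcases hr.eq_or_lt with rfl | hr
  · simp
  rw [← mul_add, ← log_mul (by positivity) (by positivity)]
  congr 2
  field_simp

end Real

open Real

theorem sum_mul_log_le_sum_mul_log_div_add {X : Type*} (s : Finset X) {P R w : X → ℝ}
    (hP : ∀ x ∈ s, 0 < P x) (hR : ∀ x ∈ s, 0 ≤ R x) (hw : ∀ x ∈ s, 0 < w x) :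
    ∑ x ∈ s, R x * log (w x)
      ≤ ∑ x ∈ s, R x * log (R x / P x) + (∑ x ∈ s, w x * P x - ∑ x ∈ s, R x) := by
  have gibbs :
      ∑ x ∈ s, R x * log (w x * P x / R x) ≤ ∑ x ∈ s, w x * P x - ∑ x ∈ s, R x := by
    rw [← sum_sub_distrib]
    exact sum_le_sum fun x hx => mul_log_div_le_sub (mul_pos (hw x hx) (hP x hx)) (hR x hx)
  calc ∑ x ∈ s, R x * log (w x)
      = ∑ x ∈ s, R x * log (w x * P x / R x) + ∑ x ∈ s, R x * log (R x / P x) := by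
        rw [← sum_add_distrib]
        exact sum_congr rfl fun x hx =>
          mul_log_eq_mul_log_div_add_mul_log_div (hw x hx) (hP x hx) (hR x hx)
    _ ≤ _ := by linarith

theorem sum_div_mul_eq_sum_mul_div {X : Type*} (s : Finset X) (R f : X → ℝ) (c : ℝ) :
    ∑ x ∈ s, R x / c * f x = (∑ x ∈ s, R x * f x) / c := by
  simp_rw [div_mul_eq_mul_div, sum_div]

theorem sandwich_upper_general {X : Type*}
    (P R w : X → ℝ) (hP : ∀ x, 0 < P x) (hR : ∀ x, 0 ≤ R x) (hw : ∀ x, 0 < w x)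
    (Q : X → ℝ) (hQdef : ∀ x, Q x = w x * P x)
    (C : Finset X)
    (hRC : 0 < ∑ x ∈ C, R x)
    (α : ℝ)
    (hma : |(∑ x ∈ C, Q x) - (∑ x ∈ C, R x)| ≤ α) :
    (∑ x ∈ C, (R x / (∑ y ∈ C, R y)) * Real.log (w x))
      ≤ (∑ x ∈ C, (R x / (∑ y ∈ C, R y)) * Real.log (R x / P x))
        + α / (∑ x ∈ C, R x) := by
  have hQC : ∑ x ∈ C, Q x = ∑ x ∈ C, w x * P x := sum_congr rfl fun x _ => hQdef x
  have hmass : ∑ x ∈ C, w x * P x - ∑ x ∈ C, R x ≤ α := hQC ▸ (le_abs_self _).trans hma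
  rw [sum_div_mul_eq_sum_mul_div, sum_div_mul_eq_sum_mul_div, ← add_div,
    div_le_div_iff_of_pos_right hRC]
  linarith [sum_mul_log_le_sum_mul_log_div_add C (fun x _ => hP x) (fun x _ => hR x)
    (fun x _ => hw x)]

theorem sandwich_upper {X : Type*} [Fintype X]
    (P R w : X → ℝ) (hP : ∀ x, 0 < P x) (hR : ∀ x, 0 ≤ R x) (hw : ∀ x, 0 < w x)
    (hPsum : ∑ x, P x = 1) (hRsum : ∑ x, R x = 1)
    (Q : X → ℝ) (hQdef : ∀ x, Q x = w x * P x) (hQsum : ∑ x, Q x = 1)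
    (C : Finset X)
    (hRC : 0 < ∑ x ∈ C, R x) (hQC : 0 < ∑ x ∈ C, Q x) (hPC : 0 < ∑ x ∈ C, P x)
    (α : ℝ) (hα : 0 ≤ α)
    (hma : |(∑ x ∈ C, Q x) - (∑ x ∈ C, R x)| ≤ α) :
    (∑ x ∈ C, (R x / (∑ y ∈ C, R y)) * Real.log (w x))
      ≤ (∑ x ∈ C, (R x / (∑ y ∈ C, R y)) * Real.log (R x / P x))
        + α / (∑ x ∈ C, R x) :=
  sandwich_upper_general P R w hP hR hw Q hQdef C hRC α hma
end

section
/- Let P, R, Q = w·P be probability distributions on a finite set X with all needed positivity, and C ⊆ X with R(C) > α ≥ 0. Suppose |Q(C) − R(C)| ≤ α and the approximate Pythagorean property |KL(R|_C ‖ Q|_C) + KL(Q|_C ‖ P|_C) − KL(R|_C ‖ P|_C)| ≤ β/R(C) holds with all KL terms finite. Then E_{R|_C}[log w(x)] ≥ log(R(C)/P(C)) − β/R(C) − α/(R(C) − α). -/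
open Finset

lemma kl_cond_eq {X : Type*} [Fintype X] (μ ν : X → ℝ) (C : Finset X) :
    kl (condOn μ C) (condOn ν C)
      = ∑ x ∈ C, (μ x / ∑ y ∈ C, μ y) *
          Real.log ((μ x / ∑ y ∈ C, μ y) / (ν x / ∑ y ∈ C, ν y)) := by
  unfold kl condOn
  rw [← Finset.sum_subset (Finset.subset_univ C) (fun x _ hx => by simp [hx])]
  exact Finset.sum_congr rfl fun x hx => by simp [hx]

lemma mul_log_div_ge (μ ν : ℝ) (hμ : 0 < μ) (hν : 0 < ν) :
    μ - ν ≤ μ * Real.log (μ / ν) := by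
  have h : Real.log (ν / μ) ≤ ν / μ - 1 := Real.log_le_sub_one_of_pos (by positivity)
  have h2 : Real.log (μ / ν) = - Real.log (ν / μ) := by
    rw [← Real.log_inv]; congr 1; field_simp
  have h3 : μ * Real.log (ν / μ) ≤ ν - μ := by
    have h5 := mul_le_mul_of_nonneg_left h hμ.le
    have h4 : μ * (ν / μ - 1) = ν - μ := by field_simp
    linarith
  rw [h2, mul_neg]; linarith

theorem sandwich_lower {X : Type*} [Fintype X]
    (P R w : X → ℝ) (hP : ∀ x, 0 < P x) (hR : ∀ x, 0 ≤ R x) (hw : ∀ x, 0 < w x)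
    (hPsum : ∑ x, P x = 1) (hRsum : ∑ x, R x = 1)
    (Q : X → ℝ) (hQdef : ∀ x, Q x = w x * P x) (hQsum : ∑ x, Q x = 1)
    (C : Finset X) (hRCx : ∀ x ∈ C, 0 < R x)
    (hRC : 0 < ∑ x ∈ C, R x) (hQC : 0 < ∑ x ∈ C, Q x) (hPC : 0 < ∑ x ∈ C, P x)
    (α β : ℝ) (hα : 0 ≤ α) (hαR : α < ∑ x ∈ C, R x)
    (hma : |(∑ x ∈ C, Q x) - (∑ x ∈ C, R x)| ≤ α)
    (hpyth : |kl (condOn R C) (condOn Q C) + kl (condOn Q C) (condOn P C)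
        - kl (condOn R C) (condOn P C)| ≤ β / (∑ x ∈ C, R x)) :
    (∑ x ∈ C, (R x / (∑ y ∈ C, R y)) * Real.log (w x))
      ≥ Real.log ((∑ x ∈ C, R x) / (∑ x ∈ C, P x))
        - β / (∑ x ∈ C, R x) - α / ((∑ x ∈ C, R x) - α) := by
  classical
  rw [kl_cond_eq R Q C, kl_cond_eq R P C, kl_cond_eq Q P C] at hpyth
  set rc := ∑ x ∈ C, R x with hrc
  set pc := ∑ x ∈ C, P x with hpc
  set qc := ∑ x ∈ C, Q x with hqc
  have hQx : ∀ x, 0 < Q x := fun x => by rw [hQdef]; exact mul_pos (hw x) (hP x)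
  have hRsum1 : ∑ x ∈ C, R x / rc = 1 := by
    rw [← Finset.sum_div, ← hrc, div_self (ne_of_gt hRC)]
  -- key identity
  have key : (∑ x ∈ C, (R x / rc) * Real.log (w x))
      = (∑ x ∈ C, (R x / rc) * Real.log ((R x / rc) / (P x / pc)))
        - (∑ x ∈ C, (R x / rc) * Real.log ((R x / rc) / (Q x / qc)))
        + Real.log (qc / pc) := by
    have step : ∀ x ∈ C, (R x / rc) * Real.log (w x)
        = ((R x / rc) * Real.log ((R x / rc) / (P x / pc))
          - (R x / rc) * Real.log ((R x / rc) / (Q x / qc))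
          + (R x / rc) * Real.log (qc / pc)) := by
      intro x hx
      have hRx := hRCx x hx
      have hw' : Real.log (w x) = Real.log (Q x) - Real.log (P x) := by
        rw [hQdef, Real.log_mul (ne_of_gt (hw x)) (ne_of_gt (hP x))]; ring
      have e1 : Real.log ((R x / rc) / (P x / pc))
          = (Real.log (R x) - Real.log rc) - (Real.log (P x) - Real.log pc) := by
        rw [Real.log_div (div_ne_zero (ne_of_gt hRx) (ne_of_gt hRC))
            (div_ne_zero (ne_of_gt (hP x)) (ne_of_gt hPC)),
          Real.log_div (ne_of_gt hRx) (ne_of_gt hRC),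
          Real.log_div (ne_of_gt (hP x)) (ne_of_gt hPC)]
      have e2 : Real.log ((R x / rc) / (Q x / qc))
          = (Real.log (R x) - Real.log rc) - (Real.log (Q x) - Real.log qc) := by
        rw [Real.log_div (div_ne_zero (ne_of_gt hRx) (ne_of_gt hRC))
            (div_ne_zero (ne_of_gt (hQx x)) (ne_of_gt hQC)),
          Real.log_div (ne_of_gt hRx) (ne_of_gt hRC),
          Real.log_div (ne_of_gt (hQx x)) (ne_of_gt hQC)]
      have e3 : Real.log (qc / pc) = Real.log qc - Real.log pc :=
        Real.log_div (ne_of_gt hQC) (ne_of_gt hPC)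
      rw [hw', e1, e2, e3]; ring
    rw [Finset.sum_congr rfl step, Finset.sum_add_distrib, Finset.sum_sub_distrib,
      ← Finset.sum_mul, hRsum1, one_mul]
  -- Gibbs: third kl term nonneg
  have hK : 0 ≤ ∑ x ∈ C, (Q x / qc) * Real.log ((Q x / qc) / (P x / pc)) := by
    have hzero : (0:ℝ) = ∑ x ∈ C, (Q x / qc - P x / pc) := by
      rw [Finset.sum_sub_distrib, ← Finset.sum_div, ← Finset.sum_div, ← hqc, ← hpc,
        div_self (ne_of_gt hQC), div_self (ne_of_gt hPC), sub_self]
    rw [hzero]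
    exact Finset.sum_le_sum fun x hx =>
      mul_log_div_ge _ _ (div_pos (hQx x) hQC) (div_pos (hP x) hPC)
  have habs := abs_le.mp hpyth
  have hma' := abs_le.mp hma
  have hqclb : rc - α ≤ qc := by linarith [hma'.2]
  have hrcα : 0 < rc - α := by linarith
  have hsplit : Real.log (qc / pc) = Real.log (rc / pc) + Real.log (qc / rc) := by
    rw [Real.log_div (ne_of_gt hQC) (ne_of_gt hPC),
      Real.log_div (ne_of_gt hRC) (ne_of_gt hPC),
      Real.log_div (ne_of_gt hQC) (ne_of_gt hRC)]
    ring
  have hlog1 : Real.log (rc / qc) ≤ rc / qc - 1 :=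
    Real.log_le_sub_one_of_pos (div_pos hRC hQC)
  have hloginv : Real.log (qc / rc) = - Real.log (rc / qc) := by
    rw [← Real.log_inv]; congr 1; field_simp
  have h5 : 1 - rc / qc ≤ Real.log (qc / rc) := by rw [hloginv]; linarith
  have h6 : -α / qc ≤ 1 - rc / qc := by
    have he : 1 - rc / qc = (qc - rc) / qc := by field_simp
    rw [he]
    exact (div_le_div_iff_of_pos_right hQC).mpr (by linarith [hma'.1])
  have h7 : α / qc ≤ α / (rc - α) := div_le_div_of_nonneg_left hα hrcα hqclb
  have h8 : -α / qc = -(α / qc) := by ring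
  rw [key, hsplit]
  rw [h8] at h6
  linarith [habs.1, hK]
end

section
/- There exist probability distributions P, R, Q on {0,1}² and a set C with R(C) = 1/2 such that Q is 0-multiaccurate for R on the family of all 1-dimensional subcubes, yet |KL(R|_C ‖ P|_C) − KL(R|_C ‖ Q|_C) − KL(Q|_C ‖ P|_C)| = 2·d(3/4, 1/2) > 0. Hence 0-multiaccuracy does not imply (0, β)-multi-group attribution for any β < d(3/4, 1/2). -/
open Finset

private lemma log_split (m n : ℕ) (hm : (m:ℝ) ≠ 0) (hn : (n:ℝ) ≠ 0) :
    Real.log ((m:ℝ)/(n:ℝ)) = Real.log m - Real.log n :=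
  Real.log_div hm hn

private lemma bkl_expand : bkl (3/4) (1/2) = 3/4 * Real.log 3 - Real.log 2 := by
  unfold bkl
  rw [show ((3:ℝ)/4)/(1/2) = 3/2 by norm_num, show (1-(3:ℝ)/4) = 1/4 by norm_num,
    show (1-(1:ℝ)/2) = 1/2 by norm_num, show ((1:ℝ)/4)/(1/2) = 1/2 by norm_num,
    Real.log_div (by norm_num) (by norm_num),
    Real.log_div (by norm_num) (by norm_num), Real.log_one]
  ring

private lemma bkl_pos : 0 < bkl (3/4) (1/2) := by
  have h : Real.log 16 < Real.log 27 := Real.log_lt_log (by norm_num) (by norm_num)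
  rw [show (16:ℝ) = 2^4 by norm_num, show (27:ℝ) = 3^3 by norm_num,
    Real.log_pow, Real.log_pow] at h
  rw [bkl_expand]
  push_cast at h
  linarith

theorem no_attribution_from_multiaccuracy :
    ∃ (P R Q : Bool × Bool → ℝ) (C : Finset (Bool × Bool)),
      (∀ x, 0 ≤ P x) ∧ (∀ x, 0 ≤ R x) ∧ (∀ x, 0 ≤ Q x) ∧
      (∑ x, P x) = 1 ∧ (∑ x, R x) = 1 ∧ (∑ x, Q x) = 1 ∧
      (∑ x ∈ C, R x) = 1/2 ∧
      (∀ C' : Finset (Bool × Bool),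
        ((∃ a, C' = Finset.univ.filter (fun x : Bool × Bool => x.1 = a))
          ∨ (∃ a, C' = Finset.univ.filter (fun x : Bool × Bool => x.2 = a))) →
        (∑ x ∈ C', Q x) = (∑ x ∈ C', R x)) ∧
      ((∃ a, C = Finset.univ.filter (fun x : Bool × Bool => x.1 = a))
        ∨ (∃ a, C = Finset.univ.filter (fun x : Bool × Bool => x.2 = a))) ∧
      |kl (condOn R C) (condOn P C) - kl (condOn R C) (condOn Q C)
          - kl (condOn Q C) (condOn P C)| = 2 * bkl (3/4) (1/2) ∧
      0 < bkl (3/4) (1/2) := by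
  refine ⟨fun x => match x with
      | (true, true) => 9/50 | (true, false) => 16/50
      | (false, true) => 16/50 | (false, false) => 9/50,
    fun x => match x with
      | (true, true) => 3/8 | (true, false) => 1/8
      | (false, true) => 1/8 | (false, false) => 3/8,
    fun x => match x with
      | (true, true) => 1/8 | (true, false) => 3/8
      | (false, true) => 3/8 | (false, false) => 1/8,
    Finset.univ.filter (fun x : Bool × Bool => x.1 = true), ?_, ?_, ?_, ?_, ?_, ?_, ?_, ?_, ?_, ?_, ?_⟩
  · rintro ⟨b1, b2⟩; cases b1 <;> cases b2 <;> norm_num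
  · rintro ⟨b1, b2⟩; cases b1 <;> cases b2 <;> norm_num
  · rintro ⟨b1, b2⟩; cases b1 <;> cases b2 <;> norm_num
  · simp [Fintype.sum_prod_type]; norm_num
  · simp [Fintype.sum_prod_type]; norm_num
  · simp [Fintype.sum_prod_type]; norm_num
  · simp [Finset.sum_filter, Fintype.sum_prod_type]; norm_num
  · rintro C' (⟨a, rfl⟩ | ⟨a, rfl⟩) <;> cases a <;>
      simp [Finset.sum_filter, Fintype.sum_prod_type] <;> norm_num
  · exact Or.inl ⟨true, rfl⟩
  · simp only [kl, condOn, Fintype.sum_prod_type, Finset.mem_filter, Finset.mem_univ, Finset.sum_filter]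
    norm_num
    have e1 : Real.log ((25:ℝ)/12) = 2*Real.log 5 - 2*Real.log 2 - Real.log 3 := by
      rw [show (25:ℝ)/12 = 5^2/(2^2*3) by norm_num,
        Real.log_div (by norm_num) (by norm_num),
        Real.log_mul (by norm_num) (by norm_num), Real.log_pow, Real.log_pow]
      push_cast; ring
    have e2 : Real.log ((25:ℝ)/64) = 2*Real.log 5 - 6*Real.log 2 := by
      rw [show (25:ℝ)/64 = 5^2/2^6 by norm_num,
        Real.log_div (by norm_num) (by norm_num), Real.log_pow, Real.log_pow]
      push_cast; ring
    have e3 : Real.log ((1:ℝ)/3) = -Real.log 3 := by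
      rw [Real.log_div (by norm_num) (by norm_num), Real.log_one]; ring
    have e4 : Real.log ((25:ℝ)/36) = 2*Real.log 5 - 2*Real.log 2 - 2*Real.log 3 := by
      rw [show (25:ℝ)/36 = 5^2/(2^2*3^2) by norm_num,
        Real.log_div (by norm_num) (by norm_num),
        Real.log_mul (by norm_num) (by norm_num), Real.log_pow, Real.log_pow,
        Real.log_pow]
      push_cast; ring
    have e5 : Real.log ((75:ℝ)/64) = Real.log 3 + 2*Real.log 5 - 6*Real.log 2 := by
      rw [show (75:ℝ)/64 = 3*5^2/2^6 by norm_num,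
        Real.log_div (by norm_num) (by norm_num),
        Real.log_mul (by norm_num) (by norm_num), Real.log_pow, Real.log_pow]
      push_cast; ring
    rw [e1, e2, e3, e4, e5, show |(3:ℝ)/4 * (2*Real.log 5 - 2*Real.log 2 - Real.log 3)
        + 1/4 * (2*Real.log 5 - 6*Real.log 2) -
        (3/4 * Real.log 3 + 1/4 * -Real.log 3)
        - (1/4 * (2*Real.log 5 - 2*Real.log 2 - 2*Real.log 3)
          + 3/4 * (Real.log 3 + 2*Real.log 5 - 6*Real.log 2))|
        = |-(2 * bkl (3/4) (1/2))| by rw [bkl_expand]; ring_nf,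
      abs_neg, abs_of_nonneg (by linarith [bkl_pos])]
  · exact bkl_pos
end

section
/- Let S be a partition of finite X, P, R distributions with P(S_i) > 0 and R(S_i) > 0 for all i, and Q the (R,S)-reweighting of P. If S is exactly multi-calibrated for a set C (i.e., R|_{S_i}(C) = P|_{S_i}(C) for all i) and R(C) > 0, then Q(C) = R(C), and the exact Pythagorean property holds: KL(R|_C ‖ Q|_C) + KL(Q|_C ‖ P|_C) = KL(R|_C ‖ P|_C), assuming P full support and R(x) > 0 for x ∈ C. -/
open Finset

theorem exact_attribution {X : Type*} [Fintype X] [DecidableEq X] {m : ℕ}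
    (S : Fin m → Finset X)
    (hdisj : ∀ i j, i ≠ j → Disjoint (S i) (S j))
    (hcover : ∀ x, ∃ i, x ∈ S i)
    (P R : X → ℝ) (hP : ∀ x, 0 < P x) (hR : ∀ x, 0 ≤ R x)
    (hPsum : ∑ x, P x = 1) (hRsum : ∑ x, R x = 1)
    (hPS : ∀ i, 0 < ∑ x ∈ S i, P x) (hRS : ∀ i, 0 < ∑ x ∈ S i, R x)
    (ind : X → Fin m) (hind : ∀ x, x ∈ S (ind x))
    (Q : X → ℝ)
    (hQ : ∀ x, Q x = ((∑ y ∈ S (ind x), R y) / (∑ y ∈ S (ind x), P y)) * P x)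
    (C : Finset X)
    (hmc : ∀ i, (∑ x ∈ S i ∩ C, R x) / (∑ x ∈ S i, R x)
        = (∑ x ∈ S i ∩ C, P x) / (∑ x ∈ S i, P x))
    (hRC : 0 < ∑ x ∈ C, R x) (hRCx : ∀ x ∈ C, 0 < R x) :
    (∑ x ∈ C, Q x) = (∑ x ∈ C, R x)
    ∧ kl (condOn R C) (condOn Q C) + kl (condOn Q C) (condOn P C)
        = kl (condOn R C) (condOn P C) := by
  classical
  set RC : ℝ := ∑ x ∈ C, R x with hRCdef
  set PC : ℝ := ∑ x ∈ C, P x with hPCdef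
  have hQpos : ∀ x, 0 < Q x := fun x => by
    rw [hQ x]; exact mul_pos (div_pos (hRS _) (hPS _)) (hP x)
  have hindeq : ∀ i x, x ∈ S i → ind x = i := by
    intro i x hx
    by_contra h
    exact (Finset.disjoint_left.mp (hdisj (ind x) i h)) (hind x) hx
  have hfiber : ∀ i, S i ∩ C = C.filter (fun x => ind x = i) := by
    intro i
    ext x
    simp only [Finset.mem_inter, Finset.mem_filter]
    constructor
    · rintro ⟨hxS, hxC⟩
      exact ⟨hxC, hindeq i x hxS⟩
    · rintro ⟨hxC, h⟩
      exact ⟨h ▸ hind x, hxC⟩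
  have key : ∀ (f : X → ℝ), ∑ x ∈ C, f x = ∑ i, ∑ x ∈ S i ∩ C, f x := by
    intro f
    rw [← Finset.sum_fiberwise C ind f]
    exact Finset.sum_congr rfl fun i _ => by rw [hfiber i]
  have hRSC : ∀ i, ∑ x ∈ S i ∩ C, R x
      = (∑ y ∈ S i, R y) / (∑ y ∈ S i, P y) * ∑ x ∈ S i ∩ C, P x := by
    intro i
    have h := (div_eq_div_iff (hRS i).ne' (hPS i).ne').mp (hmc i)
    rw [div_mul_eq_mul_div, eq_div_iff (hPS i).ne']
    linear_combination h
  have hQSC : ∀ i, ∑ x ∈ S i ∩ C, Q x = ∑ x ∈ S i ∩ C, R x := by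
    intro i
    rw [hRSC i, Finset.mul_sum]
    refine Finset.sum_congr rfl fun x hx => ?_
    have hix : ind x = i := hindeq i x (Finset.mem_inter.mp hx).1
    rw [hQ x, hix]
  have hQC : ∑ x ∈ C, Q x = RC := by
    rw [key Q, hRCdef, key R]
    exact Finset.sum_congr rfl fun i _ => hQSC i
  refine ⟨hQC, ?_⟩
  -- positivity facts
  have hCne : C.Nonempty := by
    rcases C.eq_empty_or_nonempty with h | h
    · rw [hRCdef, h] at hRC; simp at hRC
    · exact h
  have hPC : 0 < PC := Finset.sum_pos (fun x _ => hP x) hCne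
  have hRC0 : RC ≠ 0 := hRC.ne'
  have hPC0 : PC ≠ 0 := hPC.ne'
  have hklC : ∀ (μ ν : X → ℝ), kl (condOn μ C) (condOn ν C)
      = ∑ x ∈ C, (μ x / ∑ y ∈ C, μ y)
          * Real.log ((μ x / ∑ y ∈ C, μ y) / (ν x / ∑ y ∈ C, ν y)) := by
    intro μ ν
    unfold kl condOn
    rw [← Finset.sum_subset (Finset.subset_univ C)]
    · exact Finset.sum_congr rfl fun x hx => by simp [hx]
    · intro x _ hx; simp [hx]
  rw [hklC, hklC, hklC, hQC]
  rw [← sub_eq_zero, ← Finset.sum_add_distrib, ← Finset.sum_sub_distrib]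
  rw [key]
  refine Finset.sum_eq_zero fun i _ => ?_
  have hsub : ∑ x ∈ S i ∩ C, (Q x - R x) = 0 := by
    rw [Finset.sum_sub_distrib, hQSC i, sub_self]
  have hratio : (∑ y ∈ S i, R y) / (∑ y ∈ S i, P y) ≠ 0 :=
    (div_pos (hRS i) (hPS i)).ne'
  have hcongr : ∀ x ∈ S i ∩ C,
      (R x / RC * Real.log ((R x / RC) / (Q x / RC))
        + Q x / RC * Real.log ((Q x / RC) / (P x / PC))
        - R x / RC * Real.log ((R x / RC) / (P x / PC)))
      = (Q x - R x) * ((Real.log ((∑ y ∈ S i, R y) / (∑ y ∈ S i, P y))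
          + Real.log PC - Real.log RC) / RC) := by
    intro x hx
    obtain ⟨hxS, hxC⟩ := Finset.mem_inter.mp hx
    have hix : ind x = i := hindeq i x hxS
    have hr : R x ≠ 0 := (hRCx x hxC).ne'
    have hq : Q x ≠ 0 := (hQpos x).ne'
    have hp : P x ≠ 0 := (hP x).ne'
    have e1 : Real.log ((R x / RC) / (Q x / RC))
        = Real.log (R x) - Real.log (Q x) := by
      rw [Real.log_div (div_ne_zero hr hRC0) (div_ne_zero hq hRC0),
        Real.log_div hr hRC0, Real.log_div hq hRC0]; ring
    have e2 : Real.log ((Q x / RC) / (P x / PC))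
        = Real.log (Q x) - Real.log RC - Real.log (P x) + Real.log PC := by
      rw [Real.log_div (div_ne_zero hq hRC0) (div_ne_zero hp hPC0),
        Real.log_div hq hRC0, Real.log_div hp hPC0]; ring
    have e3 : Real.log ((R x / RC) / (P x / PC))
        = Real.log (R x) - Real.log RC - Real.log (P x) + Real.log PC := by
      rw [Real.log_div (div_ne_zero hr hRC0) (div_ne_zero hp hPC0),
        Real.log_div hr hRC0, Real.log_div hp hPC0]; ring
    have e4 : Real.log (Q x)
        = Real.log ((∑ y ∈ S i, R y) / (∑ y ∈ S i, P y)) + Real.log (P x) := by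
      rw [hQ x, hix, Real.log_mul hratio hp]
    rw [e1, e2, e3, e4]
    field_simp
    ring
  rw [Finset.sum_congr rfl hcongr, ← Finset.sum_mul, hsub, zero_mul]
end
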